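/- arXiv:1503.05670 — 3 statements merged into one kernel-verified Lean document; each statement's English description precedes it below -/
import Mathlib

section
/- Let S be an RNA sequence of length n and let 1 ≤ i ≤ p < j ≤ n. If L1 is a secondary structure on S[i..p] and L2 is a secondary structure on S[p+1..j], then L1 ∪ L2 is a secondary structure on S[i..j]; moreover, for any integers t, o with 1 ≤ i ≤ t ≤ p ≤ o < j ≤ n, the set L1 ∪ L2 is a (t,o) partial set for (i,j). -/
/-- The four RNA nucleotides. -/
inductive Nucleotide : Type
  | A | C | G | U
  deriving DecidableEq

open Nucleotide in
/-- `bp a b = 1` iff `{a,b} = {A,U}` or `{a,b} = {G,C}`, else `0`. -/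
def bp : Nucleotide → Nucleotide → ℕ
  | A, U => 1
  | U, A => 1
  | G, C => 1
  | C, G => 1
  | _, _ => 0

/-- `L` is a (pseudoknot-free) secondary structure on `S[i..j]`:
all pairs `(a,b)` satisfy `i ≤ a < b ≤ j` and are complementary,
no position occurs in two pairs, and no two pairs cross. -/
def IsSecStruct (S : ℕ → Nucleotide) (i j : ℕ) (L : Finset (ℕ × ℕ)) : Prop :=
  (∀ p ∈ L, i ≤ p.1 ∧ p.1 < p.2 ∧ p.2 ≤ j ∧ bp (S p.1) (S p.2) = 1) ∧
  (∀ p ∈ L, ∀ q ∈ L, p ≠ q →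
    p.1 ≠ q.1 ∧ p.1 ≠ q.2 ∧ p.2 ≠ q.1 ∧ p.2 ≠ q.2) ∧
  (∀ p ∈ L, ∀ q ∈ L, ¬ (p.1 < q.1 ∧ q.1 < p.2 ∧ p.2 < q.2))

/-- `M S i j` : maximum number of base pairs in a secondary structure on `S[i..j]`. -/
noncomputable def M (S : ℕ → Nucleotide) (i j : ℕ) : ℕ :=
  sSup {m : ℕ | ∃ L : Finset (ℕ × ℕ), IsSecStruct S i j L ∧ L.card = m}

/-- `P S i j t o = max_{t ≤ l ≤ o} (M[i,l] + M[l+1,j])`. -/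
noncomputable def P (S : ℕ → Nucleotide) (i j t o : ℕ) : ℕ :=
  (Finset.Icc t o).sup fun l => M S i l + M S (l + 1) j

/-- A `(t,o)` partial set for `(i,j)` : a secondary structure on `S[i..j]`
containing no pair `(g,h)` with `i ≤ g < t` and `o < h ≤ j`. -/
def IsPartialSet (S : ℕ → Nucleotide) (i j t o : ℕ) (L : Finset (ℕ × ℕ)) : Prop :=
  IsSecStruct S i j L ∧ ∀ p ∈ L, ¬ (i ≤ p.1 ∧ p.1 < t ∧ o < p.2 ∧ p.2 ≤ j)

/-- If `L1` is a secondary structure on `S[i..p]` and `L2` one on `S[p+1..j]`,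
then `L1 ∪ L2` is a secondary structure on `S[i..j]`, and for any
`i ≤ t ≤ p ≤ o < j` it is a `(t,o)` partial set for `(i,j)`. -/
theorem stmt_3 (n : ℕ) (S : ℕ → Nucleotide) (i p j : ℕ)
    (hi : 1 ≤ i) (hip : i ≤ p) (hpj : p < j) (hjn : j ≤ n)
    (L1 L2 : Finset (ℕ × ℕ))
    (hL1 : IsSecStruct S i p L1) (hL2 : IsSecStruct S (p + 1) j L2) :
    IsSecStruct S i j (L1 ∪ L2) ∧
      ∀ t o : ℕ, i ≤ t → t ≤ p → p ≤ o → o < j →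
        IsPartialSet S i j t o (L1 ∪ L2) := by

  obtain ⟨h1a, h1b, h1c⟩ := hL1
  obtain ⟨h2a, h2b, h2c⟩ := hL2
  have bound : ∀ q ∈ L1 ∪ L2, i ≤ q.1 ∧ q.1 < q.2 ∧ q.2 ≤ j ∧ bp (S q.1) (S q.2) = 1 := by
    intro q hq
    rcases Finset.mem_union.mp hq with h | h
    · obtain ⟨ha, hb, hc, hd⟩ := h1a q h
      exact ⟨ha, hb, hc.trans hpj.le, hd⟩
    · obtain ⟨ha, hb, hc, hd⟩ := h2a q h
      exact ⟨le_trans hip (le_trans (Nat.le_succ p) ha), hb, hc, hd⟩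
  have sec : IsSecStruct S i j (L1 ∪ L2) := by
    refine ⟨bound, ?_, ?_⟩
    · intro q hq r hr hqr
      rcases Finset.mem_union.mp hq with h | h <;> rcases Finset.mem_union.mp hr with h' | h'
      · exact h1b q h r h' hqr
      · obtain ⟨_, _, hc, _⟩ := h1a q h
        obtain ⟨ha', hb', _, _⟩ := h2a r h'
        have h1 : q.1 ≤ p := le_of_lt (lt_of_lt_of_le (h1a q h).2.1 hc)
        refine ⟨?_, ?_, ?_, ?_⟩ <;> omega
      · obtain ⟨_, _, hc, _⟩ := h1a r h'
        obtain ⟨ha', hb', _, _⟩ := h2a q h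
        have h1 : r.1 ≤ p := le_of_lt (lt_of_lt_of_le (h1a r h').2.1 hc)
        refine ⟨?_, ?_, ?_, ?_⟩ <;> omega
      · exact h2b q h r h' hqr
    · intro q hq r hr
      rcases Finset.mem_union.mp hq with h | h <;> rcases Finset.mem_union.mp hr with h' | h'
      · exact h1c q h r h'
      · obtain ⟨_, _, hc, _⟩ := h1a q h
        obtain ⟨ha', _, _, _⟩ := h2a r h'
        omega
      · obtain ⟨ha, _, hc, _⟩ := h1a r h'
        obtain ⟨ha', hb', _, _⟩ := h2a q h
        omega
      · exact h2c q h r h'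
  refine ⟨sec, fun t o ht htp hpo hoj => ⟨sec, ?_⟩⟩
  intro q hq ⟨hg1, hg2, hg3, hg4⟩
  rcases Finset.mem_union.mp hq with h | h
  · have := (h1a q h).2.2.1
    omega
  · have := (h2a q h).1
    omega
end

section
/- For an RNA sequence S of length n and integers i, j with 1 ≤ i < j ≤ n, the dynamic-programming recursion holds: M[i,j] = max{ M[i+1,j], M[i,j−1], M[i+1,j−1] + C(S(i),S(j)), max_{i ≤ p < j} (M[i,p] + M[p+1,j]) }, where M[i+1,j−1] is taken to be 0 when i+1 > j−1. -/
namespace RNAAux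

lemma empty_struct (S : ℕ → Nucleotide) (i j : ℕ) :
    IsSecStruct S i j (∅ : Finset (ℕ × ℕ)) := by
  refine ⟨?_, ?_, ?_⟩ <;> simp

lemma struct_bdd (S : ℕ → Nucleotide) (i j : ℕ) :
    BddAbove {m : ℕ | ∃ L, IsSecStruct S i j L ∧ L.card = m} := by
  refine ⟨(Finset.Icc i j).card, ?_⟩
  rintro m ⟨L, ⟨h1, h2, _⟩, rfl⟩
  rw [← Finset.card_image_of_injOn (f := Prod.fst) ?inj]
  · apply Finset.card_le_card
    intro x hx
    simp only [Finset.mem_image] at hx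
    obtain ⟨q, hq, rfl⟩ := hx
    have := h1 q hq
    simp only [Finset.mem_Icc]
    omega
  case inj =>
    intro p hp q hq hpq
    by_contra hne
    exact (h2 p hp q hq hne).1 hpq

lemma nonempty_set (S : ℕ → Nucleotide) (i j : ℕ) :
    {m : ℕ | ∃ L, IsSecStruct S i j L ∧ L.card = m}.Nonempty :=
  ⟨0, ∅, empty_struct S i j, Finset.card_empty⟩

lemma le_M {S : ℕ → Nucleotide} {i j : ℕ} (L : Finset (ℕ × ℕ))
    (h : IsSecStruct S i j L) : L.card ≤ M S i j :=
  le_csSup (struct_bdd S i j) ⟨L, h, rfl⟩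

lemma M_le {S : ℕ → Nucleotide} {i j m : ℕ}
    (h : ∀ L, IsSecStruct S i j L → L.card ≤ m) : M S i j ≤ m := by
  apply csSup_le (nonempty_set S i j)
  rintro x ⟨L, hL, rfl⟩
  exact h L hL

lemma exists_max (S : ℕ → Nucleotide) (i j : ℕ) :
    ∃ L, IsSecStruct S i j L ∧ L.card = M S i j :=
  Nat.sSup_mem (nonempty_set S i j) (struct_bdd S i j)

lemma struct_subset {S : ℕ → Nucleotide} {i j i' j' : ℕ} {L L' : Finset (ℕ × ℕ)}
    (h : IsSecStruct S i j L) (hsub : L' ⊆ L)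
    (hb : ∀ q ∈ L', i' ≤ q.1 ∧ q.2 ≤ j') : IsSecStruct S i' j' L' := by
  obtain ⟨h1, h2, h3⟩ := h
  refine ⟨fun p hp => ?_, fun p hp q hq => h2 p (hsub hp) q (hsub hq),
    fun p hp q hq => h3 p (hsub hp) q (hsub hq)⟩
  have ha := h1 p (hsub hp)
  have hbp := hb p hp
  exact ⟨hbp.1, ha.2.1, hbp.2, ha.2.2.2⟩

lemma bp_cases (a b : Nucleotide) : bp a b = 0 ∨ bp a b = 1 := by
  cases a <;> cases b <;> simp [bp]

lemma M_mono {S : ℕ → Nucleotide} {i j i' j' : ℕ} (h1 : i' ≤ i) (h2 : j ≤ j') :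
    M S i j ≤ M S i' j' := by
  apply M_le
  intro L hL
  apply le_M
  apply struct_subset hL (subset_refl _)
  intro q hq
  have := hL.1 q hq
  omega

end RNAAux
open RNAAux in
/-- The dynamic-programming recursion for `M[i,j]`, `1 ≤ i < j ≤ n`.
(Note `M S (i+1) (j-1) = 0` automatically when `i + 1 > j - 1`.) -/
theorem stmt_4 (n : ℕ) (S : ℕ → Nucleotide) (i j : ℕ)
    (hi : 1 ≤ i) (hij : i < j) (hjn : j ≤ n) :
    M S i j =
      max (max (M S (i + 1) j) (M S i (j - 1)))
        (max (M S (i + 1) (j - 1) + bp (S i) (S j))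
          ((Finset.Ico i j).sup fun p => M S i p + M S (p + 1) j)) := by
  apply le_antisymm
  · -- M ≤ RHS
    apply M_le
    intro L hL
    by_cases hi0 : ∃ p ∈ L, p.1 = i
    · obtain ⟨p0, hp0, hp0i⟩ := hi0
      have hprop := hL.1 p0 hp0
      by_cases hhj : p0.2 = j
      · -- pair (i,j) present
        have hL' : IsSecStruct S (i + 1) (j - 1) (L.erase p0) := by
          apply struct_subset hL (Finset.erase_subset _ _)
          intro q hq
          have hqL := Finset.mem_of_mem_erase hq
          have hne := Finset.ne_of_mem_erase hq
          have hd := hL.2.1 q hqL p0 hp0 hne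
          have hb := hL.1 q hqL
          omega
        have hbp : bp (S i) (S j) = 1 := by
          rw [← hp0i, ← hhj]; exact hprop.2.2.2
        have hcard : L.card = (L.erase p0).card + 1 := by
          have := Finset.card_erase_of_mem hp0
          have := Finset.card_pos.mpr ⟨p0, hp0⟩
          omega
        calc L.card = (L.erase p0).card + 1 := hcard
          _ ≤ M S (i + 1) (j - 1) + bp (S i) (S j) := by
              rw [hbp]; exact Nat.add_le_add_right (le_M _ hL') 1
          _ ≤ _ := le_max_of_le_right (le_max_left _ _)
      · -- pair (i, p0.2) with p0.2 < j : split at p0.2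
        have hsplit : ∀ q ∈ L, ¬ q.2 ≤ p0.2 → p0.2 + 1 ≤ q.1 := by
          intro q hqL hq2
          by_contra hcon
          push_neg at hcon
          have hne : q ≠ p0 := by
            intro e; subst e; omega
          have hd := hL.2.1 q hqL p0 hp0 hne
          have hcr := hL.2.2 p0 hp0 q hqL
          have hb := hL.1 q hqL
          omega
        have hL1 : IsSecStruct S i p0.2 (L.filter (fun q => q.2 ≤ p0.2)) := by
          apply struct_subset hL (Finset.filter_subset _ _)
          intro q hq
          simp only [Finset.mem_filter] at hq
          have := hL.1 q hq.1
          omega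
        have hL2 : IsSecStruct S (p0.2 + 1) j (L.filter (fun q => ¬ q.2 ≤ p0.2)) := by
          apply struct_subset hL (Finset.filter_subset _ _)
          intro q hq
          simp only [Finset.mem_filter] at hq
          exact ⟨hsplit q hq.1 hq.2, (hL.1 q hq.1).2.2.1⟩
        have hc := Finset.card_filter_add_card_filter_not
          (s := L) (p := fun q => q.2 ≤ p0.2)
        have hmem : p0.2 ∈ Finset.Ico i j := by
          simp only [Finset.mem_Ico]; omega
        calc L.card = (L.filter (fun q => q.2 ≤ p0.2)).card
              + (L.filter (fun q => ¬ q.2 ≤ p0.2)).card := hc.symm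
          _ ≤ M S i p0.2 + M S (p0.2 + 1) j :=
              Nat.add_le_add (le_M _ hL1) (le_M _ hL2)
          _ ≤ (Finset.Ico i j).sup fun p => M S i p + M S (p + 1) j :=
              Finset.le_sup (f := fun p => M S i p + M S (p + 1) j) hmem
          _ ≤ _ := le_max_of_le_right (le_max_right _ _)
    · -- position i unused
      push_neg at hi0
      have : IsSecStruct S (i + 1) j L := by
        apply struct_subset hL (subset_refl _)
        intro q hq
        have := hL.1 q hq
        have := hi0 q hq
        omega
      exact le_trans (le_M _ this) (le_max_of_le_left (le_max_left _ _))
  · -- RHS ≤ M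
    apply max_le (max_le ?_ ?_) (max_le ?_ ?_)
    · exact M_mono (by omega) le_rfl
    · exact M_mono le_rfl (by omega)
    · rcases bp_cases (S i) (S j) with h0 | h1
      · rw [h0, add_zero]
        exact M_mono (by omega) (by omega)
      · obtain ⟨L, hL, hcard⟩ := exists_max S (i + 1) (j - 1)
        have hmem : (i, j) ∉ L := fun hm => by
          have := hL.1 _ hm; omega
        have hstruct : IsSecStruct S i j (insert (i, j) L) := by
          obtain ⟨h1', h2', h3'⟩ := hL
          refine ⟨?_, ?_, ?_⟩
          · intro p hp
            rcases Finset.mem_insert.mp hp with rfl | hp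
            · exact ⟨le_rfl, hij, le_rfl, h1⟩
            · have := h1' p hp
              exact ⟨by omega, this.2.1, by omega, this.2.2.2⟩
          · intro p hp q hq hne
            rcases Finset.mem_insert.mp hp with rfl | hp <;>
              rcases Finset.mem_insert.mp hq with h' | hq
            · exact absurd h'.symm hne
            · have := h1' q hq; simp only; omega
            · subst h'; have := h1' p hp; simp only; omega
            · exact h2' p hp q hq hne
          · intro p hp q hq
            rcases Finset.mem_insert.mp hp with rfl | hp <;>
              rcases Finset.mem_insert.mp hq with h' | hq
            · subst h'; simp only; omega
            · have := h1' q hq; simp only; omega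
            · subst h'; have := h1' p hp; simp only; omega
            · exact h3' p hp q hq
        have : M S (i + 1) (j - 1) + 1 ≤ M S i j := by
          have hc := Finset.card_insert_of_notMem hmem
          rw [← hcard, ← hc]
          exact le_M _ hstruct
        omega
    · apply Finset.sup_le
      intro p hp
      simp only [Finset.mem_Ico] at hp
      obtain ⟨L1, hL1, hc1⟩ := exists_max S i p
      obtain ⟨L2, hL2, hc2⟩ := exists_max S (p + 1) j
      have hdisj : Disjoint L1 L2 := by
        rw [Finset.disjoint_left]
        intro q hq1 hq2
        have := hL1.1 q hq1
        have := hL2.1 q hq2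
        omega
      have hstruct : IsSecStruct S i j (L1 ∪ L2) := by
        obtain ⟨a1, a2, a3⟩ := hL1
        obtain ⟨b1, b2, b3⟩ := hL2
        refine ⟨?_, ?_, ?_⟩
        · intro q hq
          rcases Finset.mem_union.mp hq with hq | hq
          · have := a1 q hq; exact ⟨this.1, this.2.1, by omega, this.2.2.2⟩
          · have := b1 q hq; exact ⟨by omega, this.2.1, this.2.2.1, this.2.2.2⟩
        · intro x hx y hy hne
          rcases Finset.mem_union.mp hx with hx | hx <;>
            rcases Finset.mem_union.mp hy with hy | hy
          · exact a2 x hx y hy hne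
          · have := a1 x hx; have := b1 y hy; omega
          · have := b1 x hx; have := a1 y hy; omega
          · exact b2 x hx y hy hne
        · intro x hx y hy
          rcases Finset.mem_union.mp hx with hx | hx <;>
            rcases Finset.mem_union.mp hy with hy | hy
          · exact a3 x hx y hy
          · have := a1 x hx; have := b1 y hy; omega
          · have := b1 x hx; have := a1 y hy; omega
          · exact b3 x hx y hy
      have hcard : (L1 ∪ L2).card = M S i p + M S (p + 1) j := by
        rw [Finset.card_union_of_disjoint hdisj, hc1, hc2]
      rw [← hcard]
      exact le_M _ hstruct
end

section
/- For an RNA sequence S of length n and integers i, j with 1 ≤ i < j ≤ n, one has M[i,j] = max( M[i+1,j−1] + C(S(i),S(j)), P[i,j,i,j−1] ), where M[i+1,j−1] is taken to be 0 when i+1 > j−1. -/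
lemma secstruct_empty (S : ℕ → Nucleotide) (i j : ℕ) : IsSecStruct S i j ∅ := by
  refine ⟨by simp, by simp, by simp⟩

lemma secstruct_subset {S : ℕ → Nucleotide} {i j : ℕ} {L L' : Finset (ℕ × ℕ)}
    (h : IsSecStruct S i j L) (hs : L' ⊆ L) : IsSecStruct S i j L' :=
  ⟨fun p hp => h.1 p (hs hp), fun p hp q hq => h.2.1 p (hs hp) q (hs hq),
    fun p hp q hq => h.2.2 p (hs hp) q (hs hq)⟩

lemma secstruct_sub (S : ℕ → Nucleotide) (i j : ℕ) (L : Finset (ℕ × ℕ))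
    (h : IsSecStruct S i j L) : L ⊆ Finset.Icc i j ×ˢ Finset.Icc i j := by
  intro p hp
  obtain ⟨h1, h2, h3, _⟩ := h.1 p hp
  simp only [Finset.mem_product, Finset.mem_Icc]
  omega

lemma M_bdd (S : ℕ → Nucleotide) (i j : ℕ) :
    BddAbove {m : ℕ | ∃ L : Finset (ℕ × ℕ), IsSecStruct S i j L ∧ L.card = m} := by
  refine ⟨(Finset.Icc i j ×ˢ Finset.Icc i j).card, ?_⟩
  rintro m ⟨L, hL, rfl⟩
  exact Finset.card_le_card (secstruct_sub S i j L hL)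

lemma M_ne (S : ℕ → Nucleotide) (i j : ℕ) :
    {m : ℕ | ∃ L : Finset (ℕ × ℕ), IsSecStruct S i j L ∧ L.card = m}.Nonempty :=
  ⟨0, ∅, secstruct_empty S i j, by simp⟩

lemma card_le_M {S : ℕ → Nucleotide} {i j : ℕ} {L : Finset (ℕ × ℕ)}
    (h : IsSecStruct S i j L) : L.card ≤ M S i j :=
  le_csSup (M_bdd S i j) ⟨L, h, rfl⟩

lemma M_le {S : ℕ → Nucleotide} {i j k : ℕ}
    (h : ∀ L : Finset (ℕ × ℕ), IsSecStruct S i j L → L.card ≤ k) : M S i j ≤ k := by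
  refine csSup_le (M_ne S i j) ?_
  rintro m ⟨L, hL, rfl⟩
  exact h L hL

lemma M_exists (S : ℕ → Nucleotide) (i j : ℕ) :
    ∃ L : Finset (ℕ × ℕ), IsSecStruct S i j L ∧ L.card = M S i j :=
  Nat.sSup_mem (M_ne S i j) (M_bdd S i j)

lemma bp_le_one (a b : Nucleotide) : bp a b ≤ 1 := by
  cases a <;> cases b <;> decide

/-- Concatenation: `M i l + M (l+1) j ≤ M i j` for `i ≤ l < j`. -/
lemma M_concat (S : ℕ → Nucleotide) {i l j : ℕ} (hil : i ≤ l) (hlj : l < j) :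
    M S i l + M S (l + 1) j ≤ M S i j := by
  obtain ⟨L1, h1, hc1⟩ := M_exists S i l
  obtain ⟨L2, h2, hc2⟩ := M_exists S (l + 1) j
  have hdisj : Disjoint L1 L2 := by
    rw [Finset.disjoint_left]
    intro p hp1 hp2
    obtain ⟨_, hb, hc, _⟩ := h1.1 p hp1
    obtain ⟨ha', _, _, _⟩ := h2.1 p hp2
    omega
  have hU : IsSecStruct S i j (L1 ∪ L2) := by
    refine ⟨?_, ?_, ?_⟩
    · intro p hp
      rcases Finset.mem_union.mp hp with hp | hp
      · obtain ⟨a, b, c, d⟩ := h1.1 p hp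
        exact ⟨a, b, by omega, d⟩
      · obtain ⟨a, b, c, d⟩ := h2.1 p hp
        exact ⟨by omega, b, c, d⟩
    · intro p hp q hq hpq
      rcases Finset.mem_union.mp hp with hp | hp <;>
        rcases Finset.mem_union.mp hq with hq | hq
      · exact h1.2.1 p hp q hq hpq
      · obtain ⟨_, b, c, _⟩ := h1.1 p hp
        obtain ⟨a', b', _, _⟩ := h2.1 q hq
        omega
      · obtain ⟨_, b, c, _⟩ := h1.1 q hq
        obtain ⟨a', b', _, _⟩ := h2.1 p hp
        omega
      · exact h2.2.1 p hp q hq hpq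
    · intro p hp q hq
      rcases Finset.mem_union.mp hp with hp | hp <;>
        rcases Finset.mem_union.mp hq with hq | hq
      · exact h1.2.2 p hp q hq
      · obtain ⟨_, b, c, _⟩ := h1.1 p hp
        obtain ⟨a', b', _, _⟩ := h2.1 q hq
        omega
      · obtain ⟨_, b, c, _⟩ := h1.1 q hq
        obtain ⟨a', b', _, _⟩ := h2.1 p hp
        omega
      · exact h2.2.2 p hp q hq
  calc M S i l + M S (l + 1) j = (L1 ∪ L2).card := by
        rw [Finset.card_union_of_disjoint hdisj, hc1, hc2]
    _ ≤ M S i j := card_le_M hU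

lemma secstruct_shrink {S : ℕ → Nucleotide} {i j i' j' : ℕ} {L : Finset (ℕ × ℕ)}
    (h : IsSecStruct S i j L) (hb : ∀ p ∈ L, i' ≤ p.1 ∧ p.2 ≤ j') : IsSecStruct S i' j' L :=
  ⟨fun p hp => ⟨(hb p hp).1, (h.1 p hp).2.1, (hb p hp).2, (h.1 p hp).2.2.2⟩, h.2.1, h.2.2⟩

/-- For `1 ≤ i < j ≤ n`, `M[i,j] = max (M[i+1,j-1] + C(S i, S j)) P[i,j,i,j-1]`.
(Note `M S (i+1) (j-1) = 0` automatically when `i + 1 > j - 1`.) -/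
theorem stmt_5 (n : ℕ) (S : ℕ → Nucleotide) (i j : ℕ)
    (hi : 1 ≤ i) (hij : i < j) (hjn : j ≤ n) :
    M S i j = max (M S (i + 1) (j - 1) + bp (S i) (S j)) (P S i j i (j - 1)) := by
  apply le_antisymm
  · -- M ≤ max
    apply M_le
    intro L hL
    by_cases hjp : ∃ a, (a, j) ∈ L
    · obtain ⟨a, haL⟩ := hjp
      obtain ⟨hia, haj, hjj, hbp⟩ := hL.1 _ haL
      simp only at hia haj hjj hbp
      by_cases hai : a = i
      · subst hai
        have hE : IsSecStruct S (a + 1) (j - 1) (L.erase (a, j)) := by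
          refine ⟨?_, fun p hp q hq hpq =>
            hL.2.1 p (Finset.mem_of_mem_erase hp) q (Finset.mem_of_mem_erase hq) hpq,
            fun p hp q hq =>
            hL.2.2 p (Finset.mem_of_mem_erase hp) q (Finset.mem_of_mem_erase hq)⟩
          intro p hp
          have hpL := Finset.mem_of_mem_erase hp
          have hpne : p ≠ (a, j) := Finset.ne_of_mem_erase hp
          obtain ⟨h1, h2, h3, h4⟩ := hL.1 p hpL
          obtain ⟨d1, d2, d3, d4⟩ := hL.2.1 p hpL (a, j) haL hpne
          simp only at d1 d2 d3 d4
          exact ⟨by omega, h2, by omega, h4⟩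
        have : L.card ≤ M S (a + 1) (j - 1) + bp (S a) (S j) := by
          rw [hbp]
          calc L.card = (L.erase (a, j)).card + 1 := (Finset.card_erase_add_one haL).symm
            _ ≤ M S (a + 1) (j - 1) + 1 := Nat.add_le_add_right (card_le_M hE) 1
        exact le_trans this (le_max_left _ _)
      · have hia' : i < a := lt_of_le_of_ne hia (Ne.symm hai)
        classical
        set L1 := L.filter (fun p => p.1 < a) with hL1def
        set L2 := L.filter (fun p => ¬ p.1 < a) with hL2def
        have h1 : IsSecStruct S i (a - 1) L1 := by
          refine secstruct_shrink (secstruct_subset hL (Finset.filter_subset _ _)) ?_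
          intro p hp
          obtain ⟨hpL, hpa⟩ := Finset.mem_filter.mp hp
          obtain ⟨e1, e2, e3, e4⟩ := hL.1 p hpL
          have hpne : p ≠ (a, j) := by
            intro h; rw [h] at hpa; exact absurd hpa (by simp)
          obtain ⟨d1, d2, d3, d4⟩ := hL.2.1 p hpL (a, j) haL hpne
          simp only at d1 d2 d3 d4
          have hcross := hL.2.2 p hpL (a, j) haL
          simp only at hcross
          exact ⟨e1, by omega⟩
        have h2 : IsSecStruct S a j L2 := by
          refine secstruct_shrink (secstruct_subset hL (Finset.filter_subset _ _)) ?_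
          intro p hp
          obtain ⟨hpL, hpa⟩ := Finset.mem_filter.mp hp
          obtain ⟨e1, e2, e3, e4⟩ := hL.1 p hpL
          exact ⟨by omega, e3⟩
        have hcard : L1.card + L2.card = L.card :=
          Finset.card_filter_add_card_filter_not (p := fun p : ℕ × ℕ => p.1 < a)
        have hstep : L.card ≤ M S i (a - 1) + M S ((a - 1) + 1) j := by
          have ha1 : (a - 1) + 1 = a := by omega
          rw [ha1, ← hcard]
          exact Nat.add_le_add (card_le_M h1) (card_le_M h2)
        have hmem : a - 1 ∈ Finset.Icc i (j - 1) := by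
          simp only [Finset.mem_Icc]; omega
        have hP : M S i (a - 1) + M S ((a - 1) + 1) j ≤ P S i j i (j - 1) :=
          Finset.le_sup (f := fun l => M S i l + M S (l + 1) j) hmem
        exact le_trans (le_trans hstep hP) (le_max_right _ _)
    · -- j unpaired
      have h1 : IsSecStruct S i (j - 1) L := by
        refine secstruct_shrink hL ?_
        intro p hp
        obtain ⟨e1, e2, e3, e4⟩ := hL.1 p hp
        have : p.2 ≠ j := by
          intro h
          exact hjp ⟨p.1, by rwa [← h]⟩
        exact ⟨e1, by omega⟩
      have hmem : j - 1 ∈ Finset.Icc i (j - 1) := by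
        simp only [Finset.mem_Icc]; omega
      have hP : M S i (j - 1) + M S ((j - 1) + 1) j ≤ P S i j i (j - 1) :=
        Finset.le_sup (f := fun l => M S i l + M S (l + 1) j) hmem
      have : L.card ≤ M S i (j - 1) + M S ((j - 1) + 1) j :=
        le_trans (card_le_M h1) (Nat.le_add_right _ _)
      exact le_trans (le_trans this hP) (le_max_right _ _)
  · -- max ≤ M
    apply max_le
    · -- M (i+1) (j-1) + bp ≤ M i j
      obtain ⟨L, hLs, hLc⟩ := M_exists S (i + 1) (j - 1)
      rcases Nat.lt_or_ge (bp (S i) (S j)) 1 with hb | hb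
      · have hb0 : bp (S i) (S j) = 0 := by omega
        rw [hb0, Nat.add_zero, ← hLc]
        refine card_le_M ⟨?_, hLs.2.1, hLs.2.2⟩
        intro p hp
        obtain ⟨e1, e2, e3, e4⟩ := hLs.1 p hp
        exact ⟨by omega, e2, by omega, e4⟩
      · have hb1 : bp (S i) (S j) = 1 := le_antisymm (bp_le_one _ _) hb
        have hnm : (i, j) ∉ L := by
          intro h
          obtain ⟨e1, _, _, _⟩ := hLs.1 _ h
          simp only at e1; omega
        have hIns : IsSecStruct S i j (insert (i, j) L) := by
          refine ⟨?_, ?_, ?_⟩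
          · intro p hp
            rcases Finset.mem_insert.mp hp with rfl | hp
            · exact ⟨le_refl i, hij, le_refl j, hb1⟩
            · obtain ⟨e1, e2, e3, e4⟩ := hLs.1 p hp
              exact ⟨by omega, e2, by omega, e4⟩
          · intro p hp q hq hpq
            rcases Finset.mem_insert.mp hp with rfl | hp <;>
              rcases Finset.mem_insert.mp hq with rfl | hq
            · exact absurd rfl hpq
            · obtain ⟨e1, e2, e3, e4⟩ := hLs.1 q hq
              simp only
              omega
            · obtain ⟨e1, e2, e3, e4⟩ := hLs.1 p hp
              simp only
              omega
            · exact hLs.2.1 p hp q hq hpq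
          · intro p hp q hq
            rcases Finset.mem_insert.mp hp with rfl | hp <;>
              rcases Finset.mem_insert.mp hq with rfl | hq
            · simp only; omega
            · obtain ⟨e1, e2, e3, e4⟩ := hLs.1 q hq
              simp only
              omega
            · obtain ⟨e1, e2, e3, e4⟩ := hLs.1 p hp
              simp only
              omega
            · exact hLs.2.2 p hp q hq
        calc M S (i + 1) (j - 1) + bp (S i) (S j) = L.card + 1 := by rw [hLc, hb1]
          _ = (insert (i, j) L).card := (Finset.card_insert_of_notMem hnm).symm
          _ ≤ M S i j := card_le_M hIns
    · -- P ≤ M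
      refine Finset.sup_le ?_
      intro l hl
      rw [Finset.mem_Icc] at hl
      exact M_concat S hl.1 (by omega)
end
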